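/- Let K be a field, and let g, h be two distinct monomial functions on tuples p : k-subsets of {1,...,n} → Kˣ given by exponent vectors a ≠ b in ℤ^{C(n,k)}, with a, b both NOT in the left kernel of W_{k,n}. Assume K is infinite. Then the sum g + h is not invariant under the diagonal action of (Kˣ)ⁿ: there exist λ ∈ (Kˣ)ⁿ and p such that g(λ⋆p) + h(λ⋆p) ≠ g(p) + h(p). -/
import Mathlib

/-- The incidence matrix of `k`-subsets vs elements of `{1,...,n}`. -/
def incidenceMatrix (n k : ℕ) :
    Matrix {s : Finset (Fin n) // s.card = k} (Fin n) ℤ :=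
  Matrix.of fun I i => if i ∈ I.1 then 1 else 0


section Aux

variable {K : Type*} [Field K] [Infinite K]

lemma aux_infinite_units : Infinite Kˣ := by
  have h1 : {y : K | y ≠ 0}.Infinite := by
    have h := (Set.finite_singleton (0 : K)).infinite_compl
    have : ({(0 : K)}ᶜ : Set K) = {y : K | y ≠ 0} := by ext y; simp
    rwa [this] at h
  have h2 : Infinite {y : K // y ≠ 0} := h1.to_subtype
  exact Infinite.of_injective (fun x : {y : K // y ≠ 0} =>
    Units.mk0 x.1 x.2) (by
      intro x y h
      have := congrArg Units.val h
      exact Subtype.ext (by simpa using this))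

lemma prod_zpow_eq_zpow_sum {G : Type*} [CommGroup G] {ι : Type*} (s : Finset ι)
    (f : ι → ℤ) (t : G) : ∏ i ∈ s, t ^ f i = t ^ (∑ i ∈ s, f i) := by
  induction s using Finset.cons_induction with
  | empty => simp
  | cons i s hi ih => simp [Finset.prod_cons, Finset.sum_cons, ih, zpow_add]

lemma finite_setOf_pow_eq (m : ℕ) (hm : 0 < m) (γ : Kˣ) :
    {u : Kˣ | u ^ m = γ}.Finite := by
  apply Set.Finite.of_finite_image (f := fun u : Kˣ => (u : K))
  · apply (Polynomial.finite_setOf_isRoot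
      (Polynomial.X_pow_sub_C_ne_zero hm ((γ : K)))).subset
    rintro x ⟨u, hu, rfl⟩
    have : ((u : K)) ^ m = (γ : K) := by
      have := congrArg Units.val hu; simpa using this
    simp [Polynomial.IsRoot, this]
  · exact fun x _ y _ hxy => Units.ext hxy

lemma finite_setOf_zpow_eq (e : ℤ) (he : e ≠ 0) (γ : Kˣ) :
    {u : Kˣ | u ^ e = γ}.Finite := by
  have hm : 0 < e.natAbs := Int.natAbs_pos.mpr he
  rcases Int.natAbs_eq e with h | h
  · apply (finite_setOf_pow_eq e.natAbs hm γ).subset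
    intro u hu
    simp only [Set.mem_setOf_eq] at hu ⊢
    rw [← zpow_natCast, ← h, hu]
  · apply (finite_setOf_pow_eq e.natAbs hm γ⁻¹).subset
    intro u hu
    simp only [Set.mem_setOf_eq] at hu ⊢
    rw [h] at hu
    rw [← zpow_natCast]
    rw [zpow_neg] at hu
    rw [← inv_inv (u ^ (e.natAbs : ℤ)), hu]

lemma exists_zpow_ne (e : ℤ) (he : e ≠ 0) (γ : Kˣ) : ∃ u : Kˣ, u ^ e ≠ γ := by
  have := aux_infinite_units (K := K)
  obtain ⟨u, hu⟩ := (Set.infinite_univ.diff (finite_setOf_zpow_eq e he γ)).nonempty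
  exact ⟨u, hu.2⟩

lemma exists_zpow_ne_one_two (e f : ℤ) (he : e ≠ 0) (hf : f ≠ 0) :
    ∃ u : Kˣ, u ^ e ≠ 1 ∧ u ^ f ≠ 1 := by
  have := aux_infinite_units (K := K)
  obtain ⟨u, hu⟩ := (Set.infinite_univ.diff
    ((finite_setOf_zpow_eq e he (1 : Kˣ)).union (finite_setOf_zpow_eq f hf (1 : Kˣ)))).nonempty
  refine ⟨u, ?_, ?_⟩ <;> intro h <;> exact hu.2 (by simp [Set.mem_union, h])

end Aux

/-- Over an infinite field, a sum of two distinct monomials whose exponent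
vectors both fail to lie in the left kernel of `W_{k,n}` is not invariant under
the diagonal action. -/
theorem sum_of_noninvariant_monomials_not_invariant
    {K : Type*} [Field K] [Infinite K] (n k : ℕ)
    (a b : {s : Finset (Fin n) // s.card = k} → ℤ) (hab : a ≠ b)
    (ha : Matrix.vecMul a (incidenceMatrix n k) ≠ 0)
    (hb : Matrix.vecMul b (incidenceMatrix n k) ≠ 0) :
    ∃ (lam : Fin n → Kˣ) (p : {s : Finset (Fin n) // s.card = k} → Kˣ),
      ((∏ I : {s : Finset (Fin n) // s.card = k},
          ((∏ i ∈ I.1, lam i) * p I) ^ (a I) : Kˣ) : K)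
        + ((∏ I : {s : Finset (Fin n) // s.card = k},
          ((∏ i ∈ I.1, lam i) * p I) ^ (b I) : Kˣ) : K)
      ≠ ((∏ I : {s : Finset (Fin n) // s.card = k}, (p I) ^ (a I) : Kˣ) : K)
        + ((∏ I : {s : Finset (Fin n) // s.card = k}, (p I) ^ (b I) : Kˣ) : K) := by
  classical
  -- single-coordinate lambda computation
  have key : ∀ (i : Fin n) (t : Kˣ) (e : {s : Finset (Fin n) // s.card = k} → ℤ),
      (∏ I : {s : Finset (Fin n) // s.card = k},
        (∏ i' ∈ I.1, (if i' = i then t else 1)) ^ (e I))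
        = t ^ (Matrix.vecMul e (incidenceMatrix n k) i) := by
    intro i t e
    have h1 : ∀ I : {s : Finset (Fin n) // s.card = k},
        (∏ i' ∈ I.1, (if i' = i then t else 1)) = (if i ∈ I.1 then t else 1) :=
      fun I => Finset.prod_ite_eq' I.1 i (fun _ => t)
    calc (∏ I : {s : Finset (Fin n) // s.card = k},
            (∏ i' ∈ I.1, (if i' = i then t else 1)) ^ (e I))
        = ∏ I : {s : Finset (Fin n) // s.card = k}, (if i ∈ I.1 then t else 1) ^ (e I) := by
          refine Finset.prod_congr rfl fun I _ => by rw [h1]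
      _ = ∏ I : {s : Finset (Fin n) // s.card = k}, t ^ (e I * (if i ∈ I.1 then 1 else 0)) := by
          refine Finset.prod_congr rfl fun I _ => ?_
          by_cases hIi : i ∈ I.1 <;> simp [hIi]
      _ = t ^ (∑ I : {s : Finset (Fin n) // s.card = k}, e I * (if i ∈ I.1 then 1 else 0)) :=
          prod_zpow_eq_zpow_sum _ _ _
      _ = t ^ (Matrix.vecMul e (incidenceMatrix n k) i) := by
          rw [Matrix.vecMul, dotProduct]
          rfl
  -- split product
  have split : ∀ (lam : Fin n → Kˣ) (p : {s : Finset (Fin n) // s.card = k} → Kˣ)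
      (e : {s : Finset (Fin n) // s.card = k} → ℤ),
      (∏ I : {s : Finset (Fin n) // s.card = k}, ((∏ i ∈ I.1, lam i) * p I) ^ (e I))
        = (∏ I : {s : Finset (Fin n) // s.card = k}, (∏ i ∈ I.1, lam i) ^ (e I))
          * (∏ I : {s : Finset (Fin n) // s.card = k}, (p I) ^ (e I)) := by
    intro lam p e
    rw [← Finset.prod_mul_distrib]
    exact Finset.prod_congr rfl fun I _ => mul_zpow _ _ _
  -- single-coordinate p computation
  have pkey : ∀ (I₀ : {s : Finset (Fin n) // s.card = k}) (u : Kˣ)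
      (e : {s : Finset (Fin n) // s.card = k} → ℤ),
      (∏ I : {s : Finset (Fin n) // s.card = k},
        ((if I = I₀ then u else 1) : Kˣ) ^ (e I)) = u ^ (e I₀) := by
    intro I₀ u e
    have h2 : ∀ I : {s : Finset (Fin n) // s.card = k},
        ((if I = I₀ then u else 1) : Kˣ) ^ (e I) = (if I = I₀ then u ^ (e I₀) else 1) := by
      intro I; by_cases h : I = I₀ <;> simp [h]
    simp only [h2]
    simpa using Finset.prod_ite_eq' Finset.univ I₀ (fun _ => u ^ (e I₀))
  have hexa : ∃ i, Matrix.vecMul a (incidenceMatrix n k) i ≠ 0 := by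
    by_contra h; push_neg at h; exact ha (funext h)
  have hexb : ∃ i, Matrix.vecMul b (incidenceMatrix n k) i ≠ 0 := by
    by_contra h; push_neg at h; exact hb (funext h)
  -- case analysis
  by_cases hA : ∃ i : Fin n, Matrix.vecMul a (incidenceMatrix n k) i ≠ 0 ∧
      Matrix.vecMul b (incidenceMatrix n k) i = 0
  · obtain ⟨i, hci, hdi⟩ := hA
    obtain ⟨t, ht⟩ := exists_zpow_ne (Matrix.vecMul a (incidenceMatrix n k) i) hci (1 : Kˣ)
    refine ⟨fun j => if j = i then t else 1, 1, ?_⟩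
    simp only [split, key, Pi.one_apply, one_zpow, Finset.prod_const_one, mul_one,
      hdi, zpow_zero, Units.val_one]
    intro hcon
    exact ht (Units.ext (by simpa using add_right_cancel hcon))
  · by_cases hB : ∃ i : Fin n, Matrix.vecMul b (incidenceMatrix n k) i ≠ 0 ∧
        Matrix.vecMul a (incidenceMatrix n k) i = 0
    · obtain ⟨i, hdi, hci⟩ := hB
      obtain ⟨t, ht⟩ := exists_zpow_ne (Matrix.vecMul b (incidenceMatrix n k) i) hdi (1 : Kˣ)
      refine ⟨fun j => if j = i then t else 1, 1, ?_⟩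
      simp only [split, key, Pi.one_apply, one_zpow, Finset.prod_const_one, mul_one,
        hci, zpow_zero, Units.val_one]
      intro hcon
      exact ht (Units.ext (by simpa using add_left_cancel hcon))
    · push_neg at hA hB
      obtain ⟨i, hci⟩ := hexa
      have hdi : Matrix.vecMul b (incidenceMatrix n k) i ≠ 0 := hA i hci
      obtain ⟨t, htc, htd⟩ := exists_zpow_ne_one_two (K := K) _ _ hci hdi
      obtain ⟨I₀, hI₀⟩ : ∃ I, a I ≠ b I := by
        by_contra h; push_neg at h; exact hab (funext h)
      have he : a I₀ - b I₀ ≠ 0 := sub_ne_zero.mpr hI₀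
      have hα1 : ((t ^ Matrix.vecMul a (incidenceMatrix n k) i : Kˣ) : K) - 1 ≠ 0 := by
        intro h; apply htc; apply Units.ext; simpa using sub_eq_zero.mp h
      have hβ1 : (1 : K) - ((t ^ Matrix.vecMul b (incidenceMatrix n k) i : Kˣ) : K) ≠ 0 := by
        intro h; apply htd; apply Units.ext
        simpa using (sub_eq_zero.mp h).symm
      set γ : Kˣ := Units.mk0
        ((1 - ((t ^ Matrix.vecMul b (incidenceMatrix n k) i : Kˣ) : K))
          / (((t ^ Matrix.vecMul a (incidenceMatrix n k) i : Kˣ) : K) - 1))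
        (div_ne_zero hβ1 hα1) with hγ
      obtain ⟨u, hu⟩ := exists_zpow_ne (a I₀ - b I₀) he γ
      refine ⟨fun j => if j = i then t else 1, fun J => if J = I₀ then u else 1, ?_⟩
      simp only [split, key, pkey, Units.val_mul]
      intro hcon
      apply hu
      apply Units.ext
      have hB0 : ((u ^ b I₀ : Kˣ) : K) ≠ 0 := Units.ne_zero _
      have hval : ((u ^ (a I₀ - b I₀) : Kˣ) : K)
          = ((u ^ a I₀ : Kˣ) : K) / ((u ^ b I₀ : Kˣ) : K) := by
        rw [zpow_sub, Units.val_mul, Units.val_inv_eq_inv_val, div_eq_mul_inv]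
      rw [hval, hγ, Units.val_mk0, div_eq_div_iff hB0 hα1]
      linear_combination hcon
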